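/- Let L be a finite semilattice with a zero element θ, equipped with its canonical partial order. For t ∈ L define ρ_t ∈ ℂ[L] by ρ_θ = e_θ and ρ_t = Π_{x ≺ t} (e_t − e_x) for t ≠ θ (product in the semigroup algebra). Then the Schützenberger representation Γ satisfies Γ(ρ_t) = δ_t for every t ∈ L. -/

import Mathlib

open Finset Classical

/-- Convolution product on the semigroup algebra `ℂ[L]` of a finite semigroup. -/
noncomputable def semigroupConv {L : Type*} [Mul L] [Fintype L] (a b : L → ℂ) : L → ℂ :=
  fun z => ∑ p : L × L, if p.1 * p.2 = z then a p.1 * b p.2 else 0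

/-- The Schützenberger representation on the semigroup algebra of a finite
semilattice: `Γ(e_t)` is the indicator of the down-set `↓t = {s : s * t = s}`. -/
noncomputable def schutzRep {L : Type*} [Mul L] [Fintype L] (a : L → ℂ) : L → ℂ :=
  fun x => ∑ t : L, if x * t = x then a t else 0

/-- The element `ρ_t = Π_{x ≺ t} (e_t − e_x)` of `ℂ[L]` (with `ρ_θ = e_θ`),
realised as an iterated convolution product; since `e_t` is an identity for all
the factors, the fold below with initial value `e_t` computes exactly this
product, and gives `e_θ` when `t = θ` since then no `x ≺ t` exists. -/
noncomputable def rho {L : Type*} [Mul L] [Fintype L] (t : L) : L → ℂ :=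
  ((Finset.univ.filter (fun x : L => x * t = x ∧ x ≠ t)).toList).foldr
    (fun x acc => semigroupConv ((Pi.single t 1 : L → ℂ) - Pi.single x 1) acc)
    (Pi.single t 1)

/-!
In an idempotent commutative semigroup `x ≼ p * q ↔ x ≼ p ∧ x ≼ q`, which makes `Γ`
multiplicative. Hence `Γ(ρ_t)(x) = [x ≼ t] · ∏_{y ≺ t} ([x ≼ t] - [x ≼ y])`: the last factor
kills it unless `x ≼ t`, the factor `y = x` kills it when `x ≺ t`, and at `x = t` every factor
is `1 - 0` because `t ⋠ y` for `y ≺ t`.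
-/

lemma mul_mul_eq_self_iff {L : Type*} [CommSemigroup L] (hidem : ∀ s : L, s * s = s) {x p q : L} :
    x * (p * q) = x ↔ x * p = x ∧ x * q = x := by
  refine ⟨fun h => ⟨?_, ?_⟩, fun ⟨hp, hq⟩ => by rw [← mul_assoc, hp, hq]⟩
  · calc x * p = x * (p * q) * p := by rw [h]
      _ = x * (p * p) * q := by ac_rfl
      _ = x := by rw [hidem, mul_assoc, h]
  · calc x * q = x * (p * q) * q := by rw [h]
      _ = x * p * (q * q) := by ac_rfl
      _ = x := by rw [hidem, mul_assoc, h]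

section

variable {L : Type*} [Fintype L]

lemma schutzRep_sub [Mul L] (a b : L → ℂ) :
    schutzRep (a - b) = schutzRep a - schutzRep b := by
  funext x
  simp only [schutzRep, Pi.sub_apply, ← sum_sub_distrib, ite_sub_ite, sub_zero]

lemma schutzRep_single [Mul L] (s x : L) :
    schutzRep (Pi.single s 1) x = if x * s = x then 1 else 0 := by
  simp [schutzRep, ← sum_filter, sum_pi_single']

lemma schutzRep_semigroupConv [CommSemigroup L] (hidem : ∀ s : L, s * s = s) (a b : L → ℂ) :
    schutzRep (semigroupConv a b) = schutzRep a * schutzRep b := by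
  funext x
  calc schutzRep (semigroupConv a b) x
      = ∑ p : L × L, if x * (p.1 * p.2) = x then a p.1 * b p.2 else 0 := by
        rw [← sum_fiberwise univ (fun p : L × L => p.1 * p.2)]
        refine sum_congr rfl fun z _ => ?_
        rw [sum_congr rfl fun p hp => by rw [(mem_filter.1 hp).2]]
        split_ifs <;> simp [semigroupConv, sum_filter]
    _ = ∑ p : L × L, (if x * p.1 = x then a p.1 else 0) * (if x * p.2 = x then b p.2 else 0) := by
        simp only [mul_mul_eq_self_iff hidem, ite_zero_mul_ite_zero]
    _ = (schutzRep a * schutzRep b) x := by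
        rw [Pi.mul_apply, schutzRep, schutzRep, Fintype.sum_mul_sum, Fintype.sum_prod_type]

lemma schutzRep_foldr_semigroupConv [CommSemigroup L] (hidem : ∀ s : L, s * s = s)
    {ι : Type*} (f : ι → L → ℂ) (init : L → ℂ) (l : List ι) :
    schutzRep (l.foldr (fun i acc => semigroupConv (f i) acc) init)
      = (l.map fun i => schutzRep (f i)).prod * schutzRep init := by
  induction l with
  | nil => simp
  | cons i l ih =>
    rw [List.foldr_cons, schutzRep_semigroupConv hidem, ih, List.map_cons, List.prod_cons,
      mul_assoc]

lemma schutzRep_rho [CommSemigroup L] (hidem : ∀ s : L, s * s = s) (t : L) :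
    schutzRep (rho t) = (∏ y ∈ univ.filter (fun y : L => y * t = y ∧ y ≠ t),
      (schutzRep (Pi.single t 1) - schutzRep (Pi.single y 1))) * schutzRep (Pi.single t 1) := by
  simp only [rho, schutzRep_foldr_semigroupConv hidem, prod_map_toList, schutzRep_sub]

end

theorem schutzRep_rho_eq_single_general {L : Type*} [CommSemigroup L] [Fintype L]
    (hidem : ∀ s : L, s * s = s) (t : L) : schutzRep (rho t) = Pi.single t (1 : ℂ) := by
  funext x
  rw [schutzRep_rho hidem, Pi.mul_apply, prod_apply]
  simp only [Pi.sub_apply, schutzRep_single]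
  rcases eq_or_ne x t with rfl | hxt
  · rw [Pi.single_eq_same, if_pos (hidem x), mul_one]
    refine prod_eq_one fun y hy => ?_
    obtain ⟨hyx, hne⟩ : y * x = y ∧ y ≠ x := by simpa using hy
    have hxy : x * y ≠ x := by rwa [mul_comm, hyx]
    simp [hxy]
  · rw [Pi.single_eq_of_ne hxt]
    by_cases hle : x * t = x
    · have hmem : x ∈ univ.filter (fun y : L => y * t = y ∧ y ≠ t) := by simp [hle, hxt]
      rw [prod_eq_zero hmem (by simp [hle, hidem x]), zero_mul]
    · simp [hle]

/-- For a finite semilattice `L` with zero element `θ`, the Schützenberger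
representation satisfies `Γ(ρ_t) = δ_t` for every `t ∈ L`. -/
theorem schutzRep_rho_eq_single {L : Type*} [CommSemigroup L] [Fintype L]
    (hidem : ∀ s : L, s * s = s) (θ : L) (hθ : ∀ x : L, x * θ = θ ∧ θ * x = θ)
    (t : L) : schutzRep (rho t) = Pi.single t (1 : ℂ) :=
  schutzRep_rho_eq_single_general hidem t
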